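/- Let T ⊆ ℝⁿ be a closed regular set, I ⊆ ℤ₊ⁿ a finite regular set of multi-indices, and ν a nonnegative Borel measure on T with ∫_T |y^i| dν(y) < ∞ for all i ∈ I. For ε ∈ (0,1), let v_ε(y) denote the Lebesgue measure of {x ∈ T : ‖x − y‖ < ε} (which is positive for y ∈ T by regularity), and define ν_ε(t) = ∫_T v_ε(y)^{-1} h_ε(t − y) dν(y) for t ∈ T, where h_ε is the indicator function of the open ball of radius ε centered at 0 in ℝⁿ. Then ν_ε ∈ L¹(T, dt), ν_ε ≥ 0, ∫_T |t^i| ν_ε(t) dt < ∞ for all i ∈ I, and lim_{ε→0} ∫_T t^i ν_ε(t) dt = ∫_T y^i dν(y) for every i ∈ I. -/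

import Mathlib

/-!
By Fubini, `∫_T f(t) ν_ε(t) dt = ∫ ⨍_{T ∩ B(y,ε)} f dν(y)`: the kernel `v_ε(y)⁻¹ h_ε(t - y)`
integrates in `t ∈ T` to an average over `T ∩ B(y, ε)`, a set of positive finite measure when
`y ∈ T` by regularity of `T`. For continuous `f` these averages tend to `f y`, and for `ε < 1` they
are dominated by any `g y` bounding `|f|` on `B(y, 1)`, so dominated convergence applies.
For the monomial `t^i` one may take `g y = ∏_k 2^{i_k - 1} (|y_k|^{i_k} + 1)`; expanding the
product gives exactly the monomials `|y^j|`, `j ∈ σ_i ⊆ I`, which are `ν`-integrable. The index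
`0 ∈ I` shows that `ν` is finite, which handles `f = 1`.
-/

open MeasureTheory Filter

/-- The monomial function `t ^ i = t₁^{i₁} ⋯ tₙ^{iₙ}` on `ℝⁿ`. -/
noncomputable def mono (n : ℕ) (i : Fin n → ℕ) (t : EuclideanSpace ℝ (Fin n)) : ℝ :=
  ∏ k, t k ^ i k

/-- A set `T ⊆ ℝⁿ` is regular if it is nonempty and for every `t ∈ T` and `ε > 0` the
Lebesgue measure of `{x ∈ T : ‖x - t‖ < ε}` is positive. -/
def RegularSet (n : ℕ) (T : Set (EuclideanSpace ℝ (Fin n))) : Prop :=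
  T.Nonempty ∧ ∀ t ∈ T, ∀ ε > (0 : ℝ), 0 < volume {x ∈ T | ‖x - t‖ < ε}

/-- A finite set `I` of multi-indices is regular if it is nonempty and for every `i ∈ I` the
set `σ_i = {j : j k = 0 or j k = i k for each k}` is contained in `I`. -/
def RegularIdx (n : ℕ) (I : Finset (Fin n → ℕ)) : Prop :=
  I.Nonempty ∧ ∀ i ∈ I, ∀ j : Fin n → ℕ, (∀ k, j k = 0 ∨ j k = i k) → j ∈ I

/-- `v_ε(y)`: the Lebesgue measure of `{x ∈ T : ‖x - y‖ < ε}`. -/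
noncomputable def volBall (n : ℕ) (T : Set (EuclideanSpace ℝ (Fin n))) (ε : ℝ)
    (y : EuclideanSpace ℝ (Fin n)) : ℝ :=
  (volume {x ∈ T | ‖x - y‖ < ε}).toReal

/-- `ν_ε(t) = ∫_T v_ε(y)⁻¹ h_ε(t - y) dν(y)`, where `h_ε` is the indicator of the open
ball of radius `ε` centered at `0`. -/
noncomputable def nuEps (n : ℕ) (T : Set (EuclideanSpace ℝ (Fin n)))
    (ν : Measure (EuclideanSpace ℝ (Fin n))) (ε : ℝ)
    (t : EuclideanSpace ℝ (Fin n)) : ℝ :=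
  ∫ y, (if ‖t - y‖ < ε then (volBall n T ε y)⁻¹ else 0) ∂ν



open Set
open scoped ENNReal Topology

section SetAverage

variable {α E : Type*} [MeasurableSpace α] {μ : Measure α} {s : Set α}
  [NormedAddCommGroup E] [NormedSpace ℝ E] [CompleteSpace E]

theorem dist_setAverage_le_of_forall_mem {f : α → E} {c : E} {r : ℝ} (hs : MeasurableSet s)
    (h₀ : μ s ≠ 0) (hμs : μ s ≠ ∞) (hf : IntegrableOn f s μ) (hfc : ∀ x ∈ s, dist (f x) c ≤ r) :
    dist (⨍ x in s, f x ∂μ) c ≤ r :=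
  Metric.mem_closedBall.1 <| (convex_closedBall c r).set_average_mem Metric.isClosed_closedBall
    h₀ hμs (ae_restrict_of_forall_mem hs hfc) hf

end SetAverage

variable {n : ℕ} {T : Set (EuclideanSpace ℝ (Fin n))} {ε : ℝ}

theorem continuous_mono (i : Fin n → ℕ) : Continuous (mono n i) :=
  continuous_finsetProd _ fun k _ => (PiLp.continuous_apply 2 _ k).pow (i k)

theorem measurableSet_norm_sub_lt (y : EuclideanSpace ℝ (Fin n)) (ε : ℝ) :
    MeasurableSet {x | ‖x - y‖ < ε} :=
  (isOpen_lt (continuous_id.sub continuous_const).norm continuous_const).measurableSet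

theorem measurableSet_ballInter (hT : IsClosed T) (ε : ℝ) (y : EuclideanSpace ℝ (Fin n)) :
    MeasurableSet {x ∈ T | ‖x - y‖ < ε} :=
  hT.measurableSet.inter (measurableSet_norm_sub_lt y ε)

theorem volume_ballInter_lt_top (ε : ℝ) (y : EuclideanSpace ℝ (Fin n)) :
    volume {x ∈ T | ‖x - y‖ < ε} < ∞ :=
  (measure_mono fun _ hx => mem_ball_iff_norm.2 hx.2).trans_lt measure_ball_lt_top

theorem measurable_volBall (hT : IsClosed T) (ε : ℝ) : Measurable (volBall n T ε) := by
  have hs : MeasurableSet {p : EuclideanSpace ℝ (Fin n) × EuclideanSpace ℝ (Fin n) |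
      p.2 ∈ T ∧ ‖p.2 - p.1‖ < ε} :=
    (hT.measurableSet.preimage measurable_snd).inter
      (isOpen_lt (continuous_snd.sub continuous_fst).norm continuous_const).measurableSet
  exact (measurable_measure_prodMk_left hs).ennreal_toReal

theorem integrableOn_ballInter {f : EuclideanSpace ℝ (Fin n) → ℝ} (hf : Continuous f)
    (ε : ℝ) (y : EuclideanSpace ℝ (Fin n)) : IntegrableOn f {x ∈ T | ‖x - y‖ < ε} :=
  (hf.continuousOn.integrableOn_compact (isCompact_closedBall y ε)).mono_set
    fun _ hx => mem_closedBall_iff_norm.2 hx.2.le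

theorem RegularSet.dist_setAverage_ballInter_le (hT : IsClosed T) (hTreg : RegularSet n T)
    (hε : 0 < ε) {y : EuclideanSpace ℝ (Fin n)} (hy : y ∈ T) {f : EuclideanSpace ℝ (Fin n) → ℝ}
    (hf : Continuous f) {c r : ℝ} (hfc : ∀ x ∈ T, ‖x - y‖ < ε → dist (f x) c ≤ r) :
    dist (⨍ x in {x ∈ T | ‖x - y‖ < ε}, f x) c ≤ r :=
  dist_setAverage_le_of_forall_mem (measurableSet_ballInter hT ε y)
    (hTreg.2 y hy ε hε).ne' (volume_ballInter_lt_top ε y).ne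
    (integrableOn_ballInter hf ε y) fun x hx => hfc x hx.1 hx.2

theorem RegularSet.tendsto_setAverage_ballInter (hT : IsClosed T) (hTreg : RegularSet n T)
    {y : EuclideanSpace ℝ (Fin n)} (hy : y ∈ T) {f : EuclideanSpace ℝ (Fin n) → ℝ}
    (hf : Continuous f) :
    Tendsto (fun ε => ⨍ x in {x ∈ T | ‖x - y‖ < ε}, f x) (𝓝[>] 0) (𝓝 (f y)) := by
  refine Metric.tendsto_nhds.2 fun δ hδ => ?_
  obtain ⟨r, hr, hfr⟩ := Metric.continuousAt_iff.1 hf.continuousAt (δ / 2) (half_pos hδ)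
  filter_upwards [Ioo_mem_nhdsGT hr] with ε hε
  refine (hTreg.dist_setAverage_ballInter_le hT hε.1 hy hf fun x _ hx => ?_).trans_lt
    (half_lt_self hδ)
  exact (hfr ((dist_eq_norm x y).trans_lt (hx.trans hε.2))).le

/-- The integrand of `nuEps`. -/
noncomputable def avgKernel (n : ℕ) (T : Set (EuclideanSpace ℝ (Fin n))) (ε : ℝ)
    (t y : EuclideanSpace ℝ (Fin n)) : ℝ :=
  if ‖t - y‖ < ε then (volBall n T ε y)⁻¹ else 0

theorem avgKernel_nonneg (t y : EuclideanSpace ℝ (Fin n)) : 0 ≤ avgKernel n T ε t y := by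
  unfold avgKernel
  split_ifs
  exacts [inv_nonneg.2 ENNReal.toReal_nonneg, le_rfl]

theorem nuEps_nonneg (ν : Measure (EuclideanSpace ℝ (Fin n))) (t : EuclideanSpace ℝ (Fin n)) :
    0 ≤ nuEps n T ν ε t :=
  integral_nonneg fun y => avgKernel_nonneg t y

theorem measurable_avgKernel (hT : IsClosed T) (ε : ℝ) :
    Measurable (Function.uncurry (avgKernel n T ε)) :=
  Measurable.ite
    (isOpen_lt (continuous_fst.sub continuous_snd).norm continuous_const).measurableSet
    ((measurable_volBall hT ε).comp measurable_snd).inv measurable_const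

theorem mul_avgKernel_eq_indicator (f : EuclideanSpace ℝ (Fin n) → ℝ)
    (t y : EuclideanSpace ℝ (Fin n)) :
    f t * avgKernel n T ε t y =
      {x | ‖x - y‖ < ε}.indicator (fun x => (volBall n T ε y)⁻¹ * f x) t := by
  by_cases h : ‖t - y‖ < ε <;> simp [avgKernel, h, mul_comm]

theorem setIntegral_mul_avgKernel (f : EuclideanSpace ℝ (Fin n) → ℝ)
    (y : EuclideanSpace ℝ (Fin n)) :
    ∫ t in T, f t * avgKernel n T ε t y = ⨍ x in {x ∈ T | ‖x - y‖ < ε}, f x := by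
  simp_rw [mul_avgKernel_eq_indicator]
  rw [setIntegral_indicator (measurableSet_norm_sub_lt y ε), integral_const_mul, setAverage_eq,
    smul_eq_mul]
  rfl

section MulNuEps

variable {ν : Measure (EuclideanSpace ℝ (Fin n))} [SFinite ν] (hT : IsClosed T) (hTreg : RegularSet n T) (hνT : ν Tᶜ = 0)
  {f g : EuclideanSpace ℝ (Fin n) → ℝ} (hf : Continuous f) (hg : Integrable g ν)
include hT hTreg hνT hf hg

theorem RegularSet.integrable_mul_avgKernel (hε : 0 < ε)
    (hfg : ∀ y ∈ T, ∀ t ∈ T, ‖t - y‖ < ε → |f t| ≤ g y) :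
    Integrable (fun p => f p.1 * avgKernel n T ε p.1 p.2) ((volume.restrict T).prod ν) := by
  have hmeas : Measurable fun p : EuclideanSpace ℝ (Fin n) × EuclideanSpace ℝ (Fin n) =>
      f p.1 * avgKernel n T ε p.1 p.2 :=
    (hf.measurable.comp measurable_fst).mul (measurable_avgKernel hT ε)
  rw [integrable_prod_iff' hmeas.aestronglyMeasurable]
  refine ⟨Eventually.of_forall fun y => ?_, hg.mono' ?_ ?_⟩
  · simp_rw [mul_avgKernel_eq_indicator]
    rw [integrable_indicator_iff (measurableSet_norm_sub_lt y ε), IntegrableOn,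
      Measure.restrict_restrict (measurableSet_norm_sub_lt y ε), inter_comm]
    exact (integrableOn_ballInter hf ε y).const_mul _
  · exact (hmeas.norm.stronglyMeasurable.integral_prod_left'
      (μ := volume.restrict T)).aestronglyMeasurable
  · filter_upwards [mem_ae_iff.2 hνT] with y hy
    have hnorm :
        ∫ t in T, ‖f t * avgKernel n T ε t y‖ = ⨍ x in {x ∈ T | ‖x - y‖ < ε}, |f x| := by
      simp_rw [norm_mul, Real.norm_eq_abs, abs_of_nonneg (avgKernel_nonneg _ y)]
      exact setIntegral_mul_avgKernel _ y
    rw [Real.norm_eq_abs, abs_of_nonneg (integral_nonneg fun _ => norm_nonneg _), hnorm]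
    refine (le_abs_self _).trans ?_
    simpa using hTreg.dist_setAverage_ballInter_le hT hε hy hf.abs (c := 0)
      fun x hx hxy => by simpa using hfg y hy x hx hxy

theorem RegularSet.integrable_mul_nuEps (hε : 0 < ε)
    (hfg : ∀ y ∈ T, ∀ t ∈ T, ‖t - y‖ < ε → |f t| ≤ g y) :
    Integrable (fun t => f t * nuEps n T ν ε t) (volume.restrict T) := by
  have h := (hTreg.integrable_mul_avgKernel hT hνT hf hg hε hfg).integral_prod_left
  simp only [integral_const_mul] at h
  exact h

theorem RegularSet.setIntegral_mul_nuEps (hε : 0 < ε)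
    (hfg : ∀ y ∈ T, ∀ t ∈ T, ‖t - y‖ < ε → |f t| ≤ g y) :
    ∫ t in T, f t * nuEps n T ν ε t = ∫ y, (⨍ x in {x ∈ T | ‖x - y‖ < ε}, f x) ∂ν :=
  calc ∫ t in T, f t * nuEps n T ν ε t = ∫ t in T, (∫ y, f t * avgKernel n T ε t y ∂ν) := by
        simp only [integral_const_mul]; rfl
    _ = ∫ y, (∫ t in T, f t * avgKernel n T ε t y) ∂ν :=
        integral_integral_swap (f := fun t y => f t * avgKernel n T ε t y)
          (hTreg.integrable_mul_avgKernel hT hνT hf hg hε hfg)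
    _ = _ := by simp only [setIntegral_mul_avgKernel]

theorem RegularSet.tendsto_setIntegral_mul_nuEps
    (hfg : ∀ y ∈ T, ∀ t ∈ T, ‖t - y‖ < 1 → |f t| ≤ g y) :
    Tendsto (fun ε => ∫ t in T, f t * nuEps n T ν ε t) (𝓝[>] 0) (𝓝 (∫ y, f y ∂ν)) := by
  have hsmall : ∀ᶠ ε in 𝓝[>] (0 : ℝ), ε ∈ Ioo 0 1 := Ioo_mem_nhdsGT one_pos
  have hfgε : ∀ ε < 1, ∀ y ∈ T, ∀ t ∈ T, ‖t - y‖ < ε → |f t| ≤ g y :=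
    fun ε hε1 y hy t ht hty => hfg y hy t ht (hty.trans hε1)
  have hTae : ∀ᵐ y ∂ν, y ∈ T := mem_ae_iff.2 hνT
  refine Tendsto.congr' (hsmall.mono fun ε hε =>
    (hTreg.setIntegral_mul_nuEps hT hνT hf hg hε.1 (hfgε ε hε.2)).symm) ?_
  refine tendsto_integral_filter_of_dominated_convergence (l := 𝓝[>] (0 : ℝ)) g
    (Eventually.of_forall fun ε => ?_) ?_ hg ?_
  · simp only [← setIntegral_mul_avgKernel]
    exact ((hf.measurable.comp measurable_fst).mul
      (measurable_avgKernel hT ε)).stronglyMeasurable.integral_prod_left'.aestronglyMeasurable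
  · filter_upwards [hsmall] with ε hε
    filter_upwards [hTae] with y hy
    rw [← dist_zero_right]
    exact hTreg.dist_setAverage_ballInter_le hT hε.1 hy hf
      fun x hx hxy => by simpa using hfgε ε hε.2 y hy x hx hxy
  · filter_upwards [hTae] with y hy using hTreg.tendsto_setAverage_ballInter hT hy hf

end MulNuEps

theorem mono_zero : mono n 0 = fun _ => 1 := by
  ext; simp [mono]

theorem abs_mono_piecewise (i : Fin n → ℕ) (s : Finset (Fin n)) (y : EuclideanSpace ℝ (Fin n)) :
    |mono n (s.piecewise i 0) y| = ∏ k ∈ s, |y k| ^ i k := by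
  simp [mono, Finset.abs_prod, Finset.piecewise, apply_ite, abs_pow, Finset.prod_ite_mem]

theorem abs_mono_le_of_norm_sub_lt_one (i : Fin n → ℕ) {t y : EuclideanSpace ℝ (Fin n)}
    (h : ‖t - y‖ < 1) :
    |mono n i t| ≤ ∏ k, 2 ^ (i k - 1) * (|y k| ^ i k + 1) := by
  rw [mono, Finset.abs_prod]
  refine Finset.prod_le_prod (fun _ _ => abs_nonneg _) fun k _ => ?_
  have htk : |t k| ≤ |y k| + 1 := by
    have := PiLp.norm_apply_le (t - y) k
    simp only [PiLp.sub_apply, Real.norm_eq_abs] at this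
    linarith [abs_sub_abs_le_abs_sub (t k) (y k)]
  calc |t k ^ i k| = |t k| ^ i k := abs_pow _ _
    _ ≤ (|y k| + 1) ^ i k := pow_le_pow_left₀ (abs_nonneg _) htk _
    _ ≤ 2 ^ (i k - 1) * (|y k| ^ i k + 1 ^ i k) := add_pow_le (abs_nonneg _) zero_le_one _
    _ = _ := by rw [one_pow]

namespace RegularIdx

variable {ν : Measure (EuclideanSpace ℝ (Fin n))} {I : Finset (Fin n → ℕ)} {i : Fin n → ℕ}

theorem piecewise_mem (hI : RegularIdx n I) (hi : i ∈ I) (s : Finset (Fin n)) :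
    s.piecewise i 0 ∈ I :=
  hI.2 i hi _ fun k => by by_cases hk : k ∈ s <;> simp [hk]

theorem zero_mem (hI : RegularIdx n I) : 0 ∈ I :=
  let ⟨i, hi⟩ := hI.1
  hI.2 i hi 0 fun _ => Or.inl rfl

theorem integrable_prod_abs_pow_add_one (hI : RegularIdx n I)
    (hmom : ∀ i : I, Integrable (mono n i) ν) (hi : i ∈ I) :
    Integrable (fun y => ∏ k, (|y k| ^ i k + 1)) ν := by
  simp_rw [Finset.prod_add_one, ← abs_mono_piecewise]
  exact integrable_finsetSum _ fun s _ => (hmom ⟨_, hI.piecewise_mem hi s⟩).abs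

theorem exists_integrable_bound_mono (hI : RegularIdx n I)
    (hmom : ∀ i : I, Integrable (mono n i) ν) (hi : i ∈ I) :
    ∃ g, Integrable g ν ∧ ∀ t y, ‖t - y‖ < 1 → |mono n i t| ≤ g y :=
  ⟨_, by simpa only [Finset.prod_mul_distrib] using
    (hI.integrable_prod_abs_pow_add_one hmom hi).const_mul (∏ k, 2 ^ (i k - 1) : ℝ),
    fun _ _ => abs_mono_le_of_norm_sub_lt_one i⟩

end RegularIdx

/-- Let `T ⊆ ℝⁿ` be a closed regular set, `I` a finite regular set of
multi-indices, and `ν` a nonnegative Borel measure on `T` with `∫_T |y^i| dν < ∞` for all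
`i ∈ I`. For `ε ∈ (0,1)` define `ν_ε(t) = ∫_T v_ε(y)⁻¹ h_ε(t-y) dν(y)`. Then
`ν_ε ∈ L¹(T, dt)`, `ν_ε ≥ 0`, `∫_T |t^i| ν_ε(t) dt < ∞` for all `i ∈ I`, and
`lim_{ε→0⁺} ∫_T t^i ν_ε(t) dt = ∫_T y^i dν(y)` for every `i ∈ I`. -/
theorem stmt_16 (n : ℕ) (T : Set (EuclideanSpace ℝ (Fin n))) (hT : IsClosed T)
    (hTreg : RegularSet n T) (I : Finset (Fin n → ℕ)) (hIreg : RegularIdx n I)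
    (ν : Measure (EuclideanSpace ℝ (Fin n))) (hνT : ν Tᶜ = 0)
    (hνmom : ∀ i : I, Integrable (mono n i) ν) :
    (∀ ε : ℝ, 0 < ε → ε < 1 →
      Integrable (nuEps n T ν ε) (volume.restrict T) ∧
      (∀ t, 0 ≤ nuEps n T ν ε t) ∧
      (∀ i : I, Integrable (fun t => |mono n i t| * nuEps n T ν ε t) (volume.restrict T))) ∧
    (∀ i : I, Tendsto (fun ε : ℝ => ∫ t in T, mono n i t * nuEps n T ν ε t)
      (nhdsWithin 0 (Set.Ioi 0)) (nhds (∫ y, mono n i y ∂ν))) := by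
  have : IsFiniteMeasure ν := (integrable_const_iff_isFiniteMeasure one_ne_zero).1 <| by
    simpa [mono_zero] using hνmom ⟨0, hIreg.zero_mem⟩
  refine ⟨fun ε hε hε1 => ⟨?_, nuEps_nonneg ν, fun i => ?_⟩, fun i => ?_⟩
  · simpa using hTreg.integrable_mul_nuEps hT hνT continuous_const (integrable_const 1) hε
      fun _ _ _ _ _ => abs_one.le
  · obtain ⟨g, hg, hmono⟩ := hIreg.exists_integrable_bound_mono hνmom i.2
    exact hTreg.integrable_mul_nuEps hT hνT (continuous_mono i.1).abs hg hε
      fun y _ t _ hty => (abs_abs _).trans_le (hmono t y (hty.trans hε1))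
  · obtain ⟨g, hg, hmono⟩ := hIreg.exists_integrable_bound_mono hνmom i.2
    exact hTreg.tendsto_setIntegral_mul_nuEps hT hνT (continuous_mono i.1) hg
      fun y _ t _ hty => hmono t y hty
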